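/- If f : [0,∞)² → ℝ has the representation f(u,v) = ∫_{[0,∞)²} e^{−tu−sv} dρ(t,s) for a finite nonnegative measure ρ on [0,∞)², and d₁, d₂ are kernels of negative type on sets X and Y respectively with d₁(x,x) = d₂(y,y) = 0, then ((x,z),(y,w)) ↦ f(d₁(x,y), d₂(z,w)) is a positive definite kernel on X × Y. -/

import Mathlib

open Set MeasureTheory

/-- A kernel `K : X → X → ℝ` is positive definite if every finite real quadratic
form built from it is nonnegative. -/
def IsPosDefKernel {X : Type*} (K : X → X → ℝ) : Prop :=
  ∀ (n : ℕ) (x : Fin n → X) (c : Fin n → ℝ),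
    0 ≤ ∑ μ, ∑ ν, c μ * c ν * K (x μ) (x ν)

/-- A symmetric kernel vanishing on the diagonal is of negative type if all quadratic
forms with coefficients summing to zero are nonpositive. -/
def IsNegTypeKernel {X : Type*} (d : X → X → ℝ) : Prop :=
  (∀ x y, d x y = d y x) ∧ (∀ x, d x x = 0) ∧
    ∀ (n : ℕ) (x : Fin n → X) (c : Fin n → ℝ), (∑ μ, c μ) = 0 →
      ∑ μ, ∑ ν, c μ * c ν * d (x μ) (x ν) ≤ 0

/-!
For `t, s ≥ 0` the kernel `exp (-t d₁(x,y) - s d₂(z,w))` on `X × Y` is the Schur product of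
`exp (-t d₁)` and `exp (-s d₂)`, and integrating a family of positive definite kernels against
`ρ` keeps it positive definite. So everything rests on Schoenberg's theorem: fix `x₀`. Applying
negative type to the points `x₀, x₁, …, xₙ` with weights `-∑ cᵢ, c₁, …, cₙ` shows that
`d(x,x₀) + d(y,x₀) - d(x,y)` is positive semidefinite. By the Schur product theorem, every entrywise
power of it is positive semidefinite too, hence so is its entrywise exponential. Finally,
`exp (-t d(x,y))` is that exponential taken at `t` times the kernel, multiplied entrywise by the
rank-one kernel `g(x) g(y)`, where `g = exp (-t d(·, x₀))`.

Kernels on `X` are handled as `Matrix X X ℝ` with `X` possibly infinite: `Matrix.PosSemidef`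
quantifies over finitely supported vectors, and Mathlib's Schur product theorem holds in that
generality.
-/

open Matrix

theorem Matrix.PosSemidef.isPosDefKernel {X : Type*} {M : Matrix X X ℝ} (hM : M.PosSemidef) :
    IsPosDefKernel M := by
  intro n x c
  simpa [dotProduct, mulVec, Finset.mul_sum, mul_assoc, mul_comm, mul_left_comm] using
    (hM.submatrix x).dotProduct_mulVec_nonneg c

theorem IsPosDefKernel.posSemidef {X : Type*} {K : X → X → ℝ} (hK : IsPosDefKernel K)
    (hsymm : ∀ x y, K x y = K y x) : (of K).PosSemidef := by
  refine ⟨IsHermitian.ext fun x y => by simp [hsymm], fun v => ?_⟩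
  let e := v.support.equivFin
  simp only [Finsupp.sum, star_trivial, of_apply]
  rw [← Finset.sum_coe_sort, ← e.symm.sum_comp]
  simp_rw [← Finset.sum_coe_sort v.support, ← e.symm.sum_comp]
  simpa [mul_comm, mul_left_comm, mul_assoc] using
    hK _ (fun k => (e.symm k : X)) (fun k => v (e.symm k))

theorem Matrix.posSemidef_vecMulVec_self {X : Type*} (g : X → ℝ) :
    (vecMulVec g g).PosSemidef := by
  refine ⟨IsHermitian.ext fun x y => by simp [vecMulVec, mul_comm], fun v => ?_⟩
  have hsq : (v.sum fun i a => v.sum fun j b => star a * vecMulVec g g i j * b)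
      = (v.sum fun i a => a * g i) ^ 2 := by
    simp only [Finsupp.sum, sq, Finset.sum_mul_sum, star_trivial, vecMulVec, of_apply]
    exact Finset.sum_congr rfl fun i _ => Finset.sum_congr rfl fun j _ => by ring
  rw [hsq]
  positivity

theorem Matrix.PosSemidef.map_pow {X : Type*} {A : Matrix X X ℝ} (hA : A.PosSemidef) (k : ℕ) :
    (A.map (· ^ k)).PosSemidef := by
  induction k with
  | zero => simpa [Matrix.map, vecMulVec] using posSemidef_vecMulVec_self (1 : X → ℝ)
  | succ k ih =>
    have hsucc : A.map (· ^ (k + 1)) = A.map (· ^ k) ⊙ A := by ext; simp [pow_succ]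
    rw [hsucc]
    exact ih.hadamard hA

theorem Matrix.PosSemidef.map_exp {X : Type*} {A : Matrix X X ℝ} (hA : A.PosSemidef) :
    (A.map Real.exp).PosSemidef := by
  refine ⟨hA.1.map _ fun _ => rfl, fun v => ?_⟩
  have hterm (k : ℕ) :
      0 ≤ v.sum fun i a => v.sum fun j b => a * (A i j ^ k / k.factorial) * b := by
    have hk := (hA.map_pow k).smul (a := (k.factorial : ℝ)⁻¹) (by positivity)
    simpa [div_eq_inv_mul, mul_assoc, Finsupp.mul_sum] using hk.2 v
  refine (?_ : HasSum _ _).nonneg hterm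
  simp only [Finsupp.sum, map_apply, star_trivial]
  refine hasSum_sum fun i _ => hasSum_sum fun j _ => ?_
  simpa [Real.exp_eq_exp_ℝ] using
    ((NormedSpace.expSeries_div_hasSum_exp (A i j)).mul_left (v i)).mul_right (v j)

theorem IsNegTypeKernel.nonneg {X : Type*} {d : X → X → ℝ} (h : IsNegTypeKernel d) (a b : X) :
    0 ≤ d a b := by
  have := h.2.2 2 ![a, b] ![1, -1] (by simp)
  simp only [Fin.sum_univ_two, Matrix.cons_val_zero, Matrix.cons_val_one, h.2.1, h.1 b a] at this
  linarith

theorem IsNegTypeKernel.isPosDefKernel_gram {X : Type*} {d : X → X → ℝ} (h : IsNegTypeKernel d)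
    (x₀ : X) : IsPosDefKernel fun x y => d x x₀ + d y x₀ - d x y := by
  obtain ⟨hsymm, hzero, hneg⟩ := h
  intro n x c
  set S := ∑ μ, c μ
  set A := ∑ μ, c μ * d (x μ) x₀
  set Q := ∑ μ, ∑ ν, c μ * c ν * d (x μ) (x ν)
  have hQ : Q - 2 * S * A ≤ 0 := by
    have := hneg (n + 1) (Fin.cons x₀ x) (Fin.cons (-S) c) (by simp [S, Fin.sum_univ_succ])
    simp only [Fin.sum_univ_succ, Fin.cons_zero, Fin.cons_succ, hzero, hsymm x₀,
      Finset.sum_add_distrib] at this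
    have hcross : ∀ f : Fin n → ℝ, (∀ μ, f μ = -S * (c μ * d (x μ) x₀)) → ∑ μ, f μ = -S * A :=
      fun f hf => by simp only [hf, A, Finset.mul_sum]
    rw [hcross _ fun μ => by ring, hcross _ fun μ => by ring] at this
    linarith
  calc 0 ≤ A * S + S * A - Q := by linarith
    _ = ∑ μ, ∑ ν, (c μ * d (x μ) x₀ * c ν + c μ * (c ν * d (x ν) x₀)
          - c μ * c ν * d (x μ) (x ν)) := by
      simp only [Finset.sum_sub_distrib, Finset.sum_add_distrib, ← Finset.mul_sum,
        ← Finset.sum_mul, A, S, Q]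
    _ = _ := Finset.sum_congr rfl fun _ _ => Finset.sum_congr rfl fun _ _ => by ring

theorem IsNegTypeKernel.posSemidef_exp_neg_mul {X : Type*} {d : X → X → ℝ}
    (h : IsNegTypeKernel d) {t : ℝ} (ht : 0 ≤ t) :
    (of fun x y => Real.exp (-(t * d x y))).PosSemidef := by
  rcases isEmpty_or_nonempty X with hX | ⟨⟨x₀⟩⟩
  · exact ⟨IsHermitian.ext fun x => isEmptyElim x, fun v => by simp [Subsingleton.elim v 0]⟩
  have hgram := (h.isPosDefKernel_gram x₀).posSemidef fun x y => by rw [h.1 x y]; ring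
  have hexp : (of fun x y => Real.exp (-(t * d x y))) =
      (t • of fun x y => d x x₀ + d y x₀ - d x y).map Real.exp ⊙
        vecMulVec (fun x => Real.exp (-(t * d x x₀))) (fun x => Real.exp (-(t * d x x₀))) := by
    ext x y
    simp only [of_apply, hadamard_apply, map_apply, Matrix.smul_apply, smul_eq_mul, vecMulVec,
      ← Real.exp_add]
    ring_nf
  rw [hexp]
  exact (hgram.smul ht).map_exp.hadamard (posSemidef_vecMulVec_self _)

theorem isPosDefKernel_exp_neg_mul_sub_mul {X Y : Type*} {d₁ : X → X → ℝ} {d₂ : Y → Y → ℝ}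
    (h₁ : IsNegTypeKernel d₁) (h₂ : IsNegTypeKernel d₂) {t s : ℝ} (ht : 0 ≤ t) (hs : 0 ≤ s) :
    IsPosDefKernel fun p q : X × Y => Real.exp (-(t * d₁ p.1 q.1) - s * d₂ p.2 q.2) := by
  have hexp : (fun p q : X × Y => Real.exp (-(t * d₁ p.1 q.1) - s * d₂ p.2 q.2)) =
      (of fun x y => Real.exp (-(t * d₁ x y))).submatrix Prod.fst Prod.fst ⊙
        (of fun x y => Real.exp (-(s * d₂ x y))).submatrix Prod.snd Prod.snd := by
    ext p q
    simp only [hadamard_apply, submatrix_apply, of_apply, ← Real.exp_add, sub_eq_add_neg]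
  rw [hexp]
  exact (((h₁.posSemidef_exp_neg_mul ht).submatrix _).hadamard
    ((h₂.posSemidef_exp_neg_mul hs).submatrix _)).isPosDefKernel

theorem IsPosDefKernel.integral {X α : Type*} [MeasurableSpace α] {μ : Measure α}
    {K : α → X → X → ℝ} (hK : ∀ᵐ p ∂μ, IsPosDefKernel (K p))
    (hint : ∀ x y, Integrable (fun p => K p x y) μ) :
    IsPosDefKernel fun x y => ∫ p, K p x y ∂μ := by
  intro n x c
  have hsum : ∑ i, ∑ j, c i * c j * ∫ p, K p (x i) (x j) ∂μ
      = ∫ p, ∑ i, ∑ j, c i * c j * K p (x i) (x j) ∂μ := by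
    rw [integral_finsetSum _ fun i _ => integrable_finsetSum _ fun j _ => (hint _ _).const_mul _]
    simp_rw [integral_finsetSum _ fun j _ => (hint _ _).const_mul _, integral_const_mul]
  rw [hsum]
  exact integral_nonneg_of_ae (hK.mono fun p hp => hp n x c)

theorem integrable_exp_neg_mul_sub_mul (ρ : Measure (ℝ × ℝ)) [IsFiniteMeasure ρ] {u v : ℝ}
    (hu : 0 ≤ u) (hv : 0 ≤ v) :
    Integrable (fun p : ℝ × ℝ => Real.exp (-(p.1 * u) - p.2 * v))
      (ρ.restrict (Ici 0 ×ˢ Ici 0)) := by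
  refine Integrable.mono' (integrable_const 1) (by fun_prop) ?_
  refine (ae_restrict_mem (measurableSet_Ici.prod measurableSet_Ici)).mono fun p hp => ?_
  rw [Real.norm_of_nonneg (Real.exp_pos _).le, Real.exp_le_one_iff]
  linarith [mul_nonneg hp.1 hu, mul_nonneg hp.2 hv]

theorem laplace_transform_of_neg_type_pos_def_general {X Y : Type*}
    (f : ℝ → ℝ → ℝ) (ρ : Measure (ℝ × ℝ)) [IsFiniteMeasure ρ]
    (hf : ∀ u v : ℝ, f u v =
      ∫ p in Ici (0 : ℝ) ×ˢ Ici (0 : ℝ), Real.exp (-(p.1 * u) - p.2 * v) ∂ρ)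
    (d₁ : X → X → ℝ) (d₂ : Y → Y → ℝ)
    (h₁ : IsNegTypeKernel d₁) (h₂ : IsNegTypeKernel d₂) :
    IsPosDefKernel (fun p q : X × Y => f (d₁ p.1 q.1) (d₂ p.2 q.2)) := by
  simp only [hf]
  refine IsPosDefKernel.integral ?_ fun a b =>
    integrable_exp_neg_mul_sub_mul ρ (h₁.nonneg a.1 b.1) (h₂.nonneg a.2 b.2)
  exact (ae_restrict_mem (measurableSet_Ici.prod measurableSet_Ici)).mono fun p hp =>
    isPosDefKernel_exp_neg_mul_sub_mul h₁ h₂ hp.1 hp.2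

/-- If `f(u,v) = ∫ e^{-tu-sv} dρ(t,s)` for a finite nonnegative measure `ρ` on
`[0,∞)²`, and `d₁, d₂` are kernels of negative type, then
`((x,z),(y,w)) ↦ f(d₁(x,y), d₂(z,w))` is positive definite on `X × Y`. -/
theorem laplace_transform_of_neg_type_pos_def {X Y : Type*}
    (f : ℝ → ℝ → ℝ) (ρ : Measure (ℝ × ℝ)) [IsFiniteMeasure ρ]
    (hρ : ρ ((Ici (0 : ℝ) ×ˢ Ici (0 : ℝ))ᶜ) = 0)
    (hf : ∀ u v : ℝ, f u v =
      ∫ p in Ici (0 : ℝ) ×ˢ Ici (0 : ℝ), Real.exp (-(p.1 * u) - p.2 * v) ∂ρ)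
    (d₁ : X → X → ℝ) (d₂ : Y → Y → ℝ)
    (h₁ : IsNegTypeKernel d₁) (h₂ : IsNegTypeKernel d₂) :
    IsPosDefKernel (fun p q : X × Y => f (d₁ p.1 q.1) (d₂ p.2 q.2)) :=
  laplace_transform_of_neg_type_pos_def_general f ρ hf d₁ d₂ h₁ h₂
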